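/- In A₀, one has I(n₂)·I(n₁) = 0 for all 0 ≤ n₂ < n₁; explicitly, i(ij−ji)^(n₂) · i(ij−ji)^(n₁) = 0 whenever n₁ > n₂. -/
import Mathlib


open FreeAlgebra

noncomputable section

/-- Defining relations for the specialisation at `q = 0` of the generic composition
algebra of the Kronecker quiver, on generators `i = ι ℚ 0` and `j = ι ℚ 1`:
(1) `i^m j^(m+1) i^(m+1) j^(m+2) = i^(2m+1) j^(2m+3)` for all `m ≥ 0`;
(2) `i^(n+2) j^(n+1) i^(n+1) j^n = i^(2n+3) j^(2n+1)` for all `n ≥ 0`;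
(3) `(i^m j^m)(i^n j^n) = (i^n j^n)(i^m j^m)` for all `m, n ≥ 1`. -/
inductive KroneckerRel0 : FreeAlgebra ℚ (Fin 2) → FreeAlgebra ℚ (Fin 2) → Prop
  | preproj (m : ℕ) :
      KroneckerRel0
        (ι ℚ 0 ^ m * ι ℚ 1 ^ (m + 1) * (ι ℚ 0 ^ (m + 1) * ι ℚ 1 ^ (m + 2)))
        (ι ℚ 0 ^ (2 * m + 1) * ι ℚ 1 ^ (2 * m + 3))
  | preinj (n : ℕ) :
      KroneckerRel0
        (ι ℚ 0 ^ (n + 2) * ι ℚ 1 ^ (n + 1) * (ι ℚ 0 ^ (n + 1) * ι ℚ 1 ^ n))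
        (ι ℚ 0 ^ (2 * n + 3) * ι ℚ 1 ^ (2 * n + 1))
  | deltaComm (m n : ℕ) (hm : 1 ≤ m) (hn : 1 ≤ n) :
      KroneckerRel0
        (ι ℚ 0 ^ m * ι ℚ 1 ^ m * (ι ℚ 0 ^ n * ι ℚ 1 ^ n))
        (ι ℚ 0 ^ n * ι ℚ 1 ^ n * (ι ℚ 0 ^ m * ι ℚ 1 ^ m))

/-- `A₀`, the composition algebra of the Kronecker quiver specialised at `q = 0`,
presented by generators `i, j` and the relations above. -/
abbrev A0 : Type := RingQuot KroneckerRel0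

/-- The generator `i` of `A₀`. -/
def iA : A0 := RingQuot.mkAlgHom ℚ KroneckerRel0 (ι ℚ 0)

/-- The generator `j` of `A₀`. -/
def jA : A0 := RingQuot.mkAlgHom ℚ KroneckerRel0 (ι ℚ 1)

/-- The commutator `ij - ji` in `A₀`. -/
def cA : A0 := iA * jA - jA * iA

/-- `P(m) = (ij - ji)^m j` in `A₀`. -/
def PA (m : ℕ) : A0 := cA ^ m * jA

/-- `I(n) = i (ij - ji)^n` in `A₀`. -/
def IA (n : ℕ) : A0 := iA * cA ^ n

/-- `R(1) = ij - ji` and `R(s+1) = i (ij - ji)^s j` for `s ≥ 1` in `A₀`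
(the value at `0` is junk). -/
def RA : ℕ → A0
  | 0 => 0
  | 1 => cA
  | (s + 2) => iA * cA ^ (s + 1) * jA

/-- `δ_m = i^m j^m` in `A₀`. -/
def deltaA (m : ℕ) : A0 := iA ^ m * jA ^ m


section Aux

private lemma rel2 (n : ℕ) :
    iA ^ (n+2) * jA ^ (n+1) * (iA ^ (n+1) * jA ^ n)
      = iA ^ (2*n+3) * jA ^ (2*n+1) := by
  have h := RingQuot.mkAlgHom_rel ℚ (KroneckerRel0.preinj n)
  simp only [map_mul, map_pow] at h
  simp only [iA, jA]
  exact h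

private lemma relC (m n : ℕ) :
    iA^(m+1)*jA^(m+1)*(iA^(n+1)*jA^(n+1)) = iA^(n+1)*jA^(n+1)*(iA^(m+1)*jA^(m+1)) := by
  have h := RingQuot.mkAlgHom_rel ℚ (KroneckerRel0.deltaComm (m+1) (n+1) (by omega) (by omega))
  simp only [map_mul, map_pow] at h
  simp only [iA, jA]
  exact h

private lemma L1 : iA^2*jA*iA = iA^3*jA := by
  have h := rel2 0
  simpa using h

private lemma i2c : iA^2 * cA = 0 := by
  have h3 : iA^3 = iA^2*iA := pow_succ iA 2
  simp only [cA, mul_sub, ← mul_assoc]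
  rw [← h3, L1, sub_self]

/-- word `i^a j^b` -/
private noncomputable def W (a b : ℕ) : A0 := iA ^ a * jA ^ b

private lemma W00 : W 0 0 = 1 := by simp [W]

private lemma iAW (a b : ℕ) : iA * W a b = W (a+1) b := by
  simp only [W, ← mul_assoc, ← pow_succ']

private lemma relCW (m n : ℕ) :
    W (m+1) (m+1) * W (n+1) (n+1) = W (n+1) (n+1) * W (m+1) (m+1) := by
  simp only [W]; exact relC m n

private lemma L1r : iA^2*(jA*iA) = iA^3*jA := by rw [← mul_assoc]; exact L1

private lemma L1t (t : ℕ) : W (t+2) 1 * iA = W (t+3) 1 := by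
  have e1 : t+2 = t+2 := rfl
  simp only [W, pow_one, pow_add, mul_assoc, L1r]

private lemma hMv (t : ℕ) : ∀ k, W (t+2) 1 * iA^k = W (t+2+k) 1 := by
  intro k
  induction k with
  | zero => simp
  | succ k ih =>
      rw [pow_succ, ← mul_assoc, ih]
      have e : t+2+k = t+k+2 := by omega
      have e2 : t+2+(k+1) = t+k+3 := by omega
      rw [e, e2, L1t]

private lemma hS (t c d : ℕ) : W (t+2) 1 * W c d = W (t+2+c) (d+1) := by
  have h1 : W (t+2) 1 * W c d = (W (t+2) 1 * iA^c) * jA^d := by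
    simp only [W, mul_assoc]
  rw [h1, hMv]
  simp only [W, pow_one, mul_assoc, ← pow_succ']

private lemma Vbase (x : ℕ) : W (x+2) (x+1) * W 1 1 = W (x+3) (x+2) := by
  have h1 : W (x+2) (x+1) = iA * W (x+1) (x+1) := (iAW (x+1) (x+1)).symm
  have h2 : iA * W 1 1 = W 2 1 := iAW 1 1
  calc W (x+2) (x+1) * W 1 1 = iA * (W (x+1) (x+1) * W 1 1) := by rw [h1, mul_assoc]
    _ = iA * (W 1 1 * W (x+1) (x+1)) := by rw [relCW x 0]
    _ = (iA * W 1 1) * W (x+1) (x+1) := by rw [mul_assoc]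
    _ = W 2 1 * W (x+1) (x+1) := by rw [h2]
    _ = W (2+(x+1)) (x+2) := hS 0 (x+1) (x+1)
    _ = W (x+3) (x+2) := by rw [show 2+(x+1) = x+3 by omega]

private lemma Vphi : ∀ s m : ℕ, W (m+2) (m+1) * W (s+1) (s+1) = W (m+s+3) (m+s+2) := by
  intro s
  induction s with
  | zero => intro m; simpa using Vbase m
  | succ s ih =>
      intro m
      calc W (m+2) (m+1) * W (s+2) (s+2)
          = iA * (W (m+1) (m+1) * W (s+2) (s+2)) := by rw [← mul_assoc, iAW]
        _ = iA * (W (s+2) (s+2) * W (m+1) (m+1)) := by rw [relCW m (s+1)]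
        _ = (iA * W (s+2) (s+2)) * W (m+1) (m+1) := by rw [mul_assoc]
        _ = W (s+3) (s+2) * W (m+1) (m+1) := by rw [iAW]
        _ = (W (s+2) (s+1) * W 1 1) * W (m+1) (m+1) := by rw [Vbase s]
        _ = W (s+2) (s+1) * (W 1 1 * W (m+1) (m+1)) := by rw [mul_assoc]
        _ = W (s+2) (s+1) * (W (m+1) (m+1) * W 1 1) := by rw [relCW 0 m]
        _ = (W (s+2) (s+1) * W (m+1) (m+1)) * W 1 1 := by rw [mul_assoc]
        _ = (iA * (W (s+1) (s+1) * W (m+1) (m+1))) * W 1 1 := by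
              conv_rhs => rw [← mul_assoc iA, iAW]
        _ = (iA * (W (m+1) (m+1) * W (s+1) (s+1))) * W 1 1 := by rw [relCW (s) (m)]
        _ = (W (m+2) (m+1) * W (s+1) (s+1)) * W 1 1 := by
              conv_lhs => rw [← mul_assoc iA, iAW]
        _ = W (m+s+3) (m+s+2) * W 1 1 := by rw [ih m]
        _ = W ((m+s+1)+2) ((m+s+1)+1) * W 1 1 := by rw [show m+s+3 = m+s+1+2 by omega, show m+s+2 = m+s+1+1 by omega]
        _ = W (m+s+1+3) (m+s+1+2) := Vbase (m+s+1)
        _ = W (m+(s+1)+3) (m+(s+1)+2) := by rw [show m+s+1+3 = m+(s+1)+3 by omega, show m+s+1+2 = m+(s+1)+2 by omega]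

private lemma E' (t m : ℕ) : W (m+1+t) m * W 1 1 = W (m+2+t) (m+1) := by
  cases m with
  | zero =>
      simp only [W, pow_zero, mul_one, pow_one]
      calc iA^(1+t) * (iA*jA) = (iA^(1+t)*iA)*jA := by rw [mul_assoc]
        _ = iA^(1+t+1)*jA := by rw [← pow_succ]
        _ = iA^(0+2+t)*jA^1 := by rw [show 1+t+1 = 0+2+t by omega, pow_one]
  | succ s =>
      have h1 : W (s+1+1+t) (s+1) = iA^t * W (s+2) (s+1) := by
        simp only [W, ← mul_assoc, ← pow_add]
        rw [show t+(s+2) = s+1+1+t by omega]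
      calc W (s+1+1+t) (s+1) * W 1 1 = iA^t * (W (s+2) (s+1) * W 1 1) := by rw [h1, mul_assoc]
        _ = iA^t * W (s+3) (s+2) := by rw [Vbase s]
        _ = W (t+(s+3)) (s+2) := by simp only [W, ← mul_assoc, ← pow_add]
        _ = W (s+1+2+t) (s+1+1) := by rw [show t+(s+3) = s+1+2+t by omega]

private lemma Cc (t m : ℕ) : W (m+1+t) m * cA = W (m+2+t) (m+1) - W (m+1+t) (m+1) * iA := by
  have h1 : W (m+1+t) m * (iA*jA) = W (m+2+t) (m+1) := by
    have : (iA*jA) = W 1 1 := by simp [W]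
    rw [this, E']
  have h2 : W (m+1+t) m * (jA*iA) = W (m+1+t) (m+1) * iA := by
    simp only [W, mul_assoc]
    rw [← mul_assoc (jA^m) jA iA, ← pow_succ]
  simp only [cA, mul_sub, h1, h2]

/-- `B m = i^(m+1) j^m i - i^(m+2) j^m` -/
private noncomputable def BB (m : ℕ) : A0 := W (m+1) m * iA - W (m+2) m

/-- `U M r = i^(M+1) j^M i^(r+1) j^r - i^(M+r+2) j^(M+r)` -/
private noncomputable def UU (M r : ℕ) : A0 := W (M+1) M * W (r+1) r - W (M+r+2) (M+r)

private lemma hB1 : BB 1 = 0 := by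
  have h : W 2 1 * iA = W 3 1 := by simpa using L1t 0
  simp [BB, h]

private lemma hBc (m : ℕ) : BB (m+1) * cA = UU (m+1) 1 := by
  have hX1 : (W (m+2) (m+1) * iA) * cA
      = W (m+2) (m+1) * W 2 1 - W (m+3) (m+2) * iA := by
    have e1 : (W (m+2) (m+1) * iA) * (iA*jA) = W (m+2) (m+1) * W 2 1 := by
      rw [mul_assoc, ← mul_assoc iA iA jA]
      have : iA*iA = iA^2 := (sq iA).symm
      rw [this, show iA^2*jA = W 2 1 from by simp [W]]
    have e2 : (W (m+2) (m+1) * iA) * (jA*iA) = W (m+3) (m+2) * iA := by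
      rw [mul_assoc, ← mul_assoc iA jA iA, show iA*jA = W 1 1 from by simp [W],
          ← mul_assoc, show W (m+2) (m+1) * W 1 1 = W (m+3) (m+2) from by simpa using E' 0 (m+1)]
    simp only [cA, mul_sub, e1, e2]
  have hX2 : W (m+3) (m+1) * cA = W (m+4) (m+2) - W (m+3) (m+2) * iA := by
    have := Cc 1 (m+1)
    rw [show m+1+1+1 = m+3 by omega, show m+1+2+1 = m+4 by omega] at this
    exact this
  calc BB (m+1) * cA = (W (m+2) (m+1) * iA) * cA - W (m+3) (m+1) * cA := by
        simp [BB, sub_mul]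
    _ = W (m+2) (m+1) * W 2 1 - W (m+3) (m+2) * iA
          - (W (m+4) (m+2) - W (m+3) (m+2) * iA) := by rw [hX1, hX2]
    _ = W (m+2) (m+1) * W 2 1 - W (m+4) (m+2) := by abel
    _ = UU (m+1) 1 := by
        simp only [UU]

private lemma hUc (m r : ℕ) : UU (m+1) (r+1) * cA = UU (m+1) (r+2) := by
  have hc1 : W (r+2) (r+1) * cA = W (r+3) (r+2) - W (r+2) (r+2) * iA := by
    have := Cc 0 (r+1)
    rw [show r+1+1+0 = r+2 by omega, show r+1+2+0 = r+3 by omega] at this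
    exact this
  have hc2 : W (m+r+4) (m+r+2) * cA = W (m+r+5) (m+r+3) - W (m+r+4) (m+r+3) * iA := by
    have := Cc 1 (m+r+2)
    rw [show m+r+2+1+1 = m+r+4 by omega, show m+r+2+2+1 = m+r+5 by omega] at this
    exact this
  have hV : W (m+2) (m+1) * W (r+2) (r+2) = W (m+r+4) (m+r+3) := by
    have := Vphi (r+1) m
    rw [show r+1+1 = r+2 by omega] at this
    rw [this, show m+(r+1)+3 = m+r+4 by omega, show m+(r+1)+2 = m+r+3 by omega]
  calc UU (m+1) (r+1) * cA
      = W (m+2) (m+1) * (W (r+2) (r+1) * cA) - W (m+r+4) (m+r+2) * cA := by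
        simp only [UU]
        rw [show m+1+1 = m+2 by omega, show m+1+(r+1)+2 = m+r+4 by omega,
            show m+1+(r+1) = m+r+2 by omega, sub_mul, mul_assoc]
    _ = W (m+2) (m+1) * (W (r+3) (r+2) - W (r+2) (r+2) * iA)
          - (W (m+r+5) (m+r+3) - W (m+r+4) (m+r+3) * iA) := by rw [hc1, hc2]
    _ = W (m+2) (m+1) * W (r+3) (r+2) - (W (m+2) (m+1) * W (r+2) (r+2)) * iA
          - W (m+r+5) (m+r+3) + W (m+r+4) (m+r+3) * iA := by
        rw [mul_sub, ← mul_assoc]; abel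
    _ = W (m+2) (m+1) * W (r+3) (r+2) - W (m+r+5) (m+r+3) := by rw [hV]; abel
    _ = UU (m+1) (r+2) := by
        simp only [UU]
        rw [show m+1+1 = m+2 by omega, show m+1+(r+2)+2 = m+r+5 by omega,
            show m+1+(r+2) = m+r+3 by omega]

private lemma hUchain (m : ℕ) : ∀ k, UU (m+1) 1 * cA^k = UU (m+1) (k+1) := by
  intro k
  induction k with
  | zero => simp
  | succ k ih =>
      rw [pow_succ, ← mul_assoc, ih]
      have := hUc m k
      rw [show k+2 = k+1+1 by omega]
      exact this

private lemma hUtop (n : ℕ) : UU (n+1) n = 0 := by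
  have h := rel2 n
  simp only [UU, W]
  rw [show n+1+1 = n+2 by omega, show n+1+n+2 = 2*n+3 by omega,
      show n+1+n = 2*n+1 by omega, h, sub_self]

private lemma KeyB : ∀ n, BB (n+1) * cA^n = 0 := by
  intro n
  cases n with
  | zero => simpa using hB1
  | succ k =>
      rw [pow_succ', ← mul_assoc, hBc (k+1), hUchain (k+1) k, hUtop (k+1)]

private lemma hA2 (x e : ℕ) : (W (x+1) x * iA) * cA^(x+1+e) = 0 := by
  cases x with
  | zero =>
      have h0 : W 1 0 * iA = iA^2 := by simp [W, sq]
      rw [h0, show 0+1+e = 1+e by omega, pow_add, pow_one, ← mul_assoc, i2c, zero_mul]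
  | succ s =>
      have hsplit : W (s+1+1) (s+1) * iA = BB (s+1) + W (s+1+2) (s+1) := by
        simp [BB]
      rw [hsplit, add_mul]
      have t1 : BB (s+1) * cA^(s+1+1+e) = 0 := by
        rw [show s+1+1+e = s+(2+e) by omega, pow_add, ← mul_assoc, KeyB s, zero_mul]
      have hz : W (s+3) (s+1) * cA = - BB (s+2) := by
        have := Cc 1 (s+1)
        rw [show s+1+1+1 = s+3 by omega, show s+1+2+1 = s+4 by omega] at this
        rw [this]
        simp [BB, neg_sub]
      have t2 : W (s+1+2) (s+1) * cA^(s+1+1+e) = 0 := by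
        rw [show s+1+2 = s+3 by omega, show s+1+1+e = 1+(s+1+e) by omega,
            pow_add, pow_one, ← mul_assoc, hz]
        have hk := KeyB (s+1)
        rw [show s+1+1 = s+2 by omega] at hk
        rw [show cA^(s+1+e) = cA^(s+1)*cA^e from by rw [← pow_add],
            ← mul_assoc, neg_mul (BB (s+2)) (cA^(s+1)), hk, neg_zero, zero_mul]
      rw [t1, t2, add_zero]

private lemma hPhi : ∀ n, W (n+1) n = ∑ k ∈ Finset.range (n+1), W k k * (iA * cA^(n-k)) := by
  intro n
  induction n with
  | zero => simp [Finset.sum_range_one, W00, W]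
  | succ n ih =>
      have hc : W (n+2) (n+1) = W (n+1) n * cA + W (n+1) (n+1) * iA := by
        have := Cc 0 n
        rw [show n+1+0 = n+1 by omega, show n+2+0 = n+2 by omega] at this
        rw [this]
        abel
      rw [hc, ih, Finset.sum_mul,
          Finset.sum_range_succ (fun k => W k k * (iA * cA^(n+1-k))) (n+1)]
      congr 1
      · apply Finset.sum_congr rfl
        intro k hk
        have hk' : k ≤ n := by simpa [Nat.lt_succ_iff] using hk
        rw [mul_assoc, mul_assoc, ← pow_succ, show n-k+1 = n+1-k by omega]
      · rw [show n+1-(n+1) = 0 by omega, pow_zero, mul_one]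

private lemma hG : ∀ n, (iA * cA^n) * (iA * cA^(n+1)) = 0 := by
  intro n
  induction n using Nat.strong_induction_on with
  | _ n ih =>
  have hphi := hPhi n
  rw [Finset.sum_range_succ'] at hphi
  have hf0 : W 0 0 * (iA * cA^(n-0)) = iA * cA^n := by simp [W00]
  rw [hf0] at hphi
  have hI : iA*cA^n
      = W (n+1) n - ∑ k ∈ Finset.range n, W (k+1) (k+1) * (iA*cA^(n-(k+1))) :=
    eq_sub_of_add_eq' hphi.symm
  rw [hI, sub_mul, Finset.sum_mul]
  have h1 : W (n+1) n * (iA * cA^(n+1)) = 0 := by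
    rw [← mul_assoc]
    have := hA2 n 0
    rw [show n+1+0 = n+1 by omega] at this
    exact this
  have h2 : ∀ k ∈ Finset.range n,
      (W (k+1) (k+1) * (iA*cA^(n-(k+1)))) * (iA * cA^(n+1)) = 0 := by
    intro k hk
    have hk' : k < n := Finset.mem_range.mp hk
    have hsplit : cA^(n+1) = cA^(n-k) * cA^(k+1) := by
      rw [← pow_add, show n-k+(k+1) = n+1 by omega]
    rw [mul_assoc, hsplit]
    have inner : (iA*cA^(n-(k+1))) * (iA * (cA^(n-k) * cA^(k+1))) = 0 := by
      rw [← mul_assoc iA (cA^(n-k)) (cA^(k+1)), ← mul_assoc]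
      have hg := ih (n-(k+1)) (by omega)
      rw [show (n-(k+1))+1 = n-k by omega] at hg
      rw [hg, zero_mul]
    rw [inner, mul_zero]
  rw [h1, Finset.sum_eq_zero h2, sub_zero]

private lemma mainIA (n₁ n₂ : ℕ) (h : n₂ < n₁) : IA n₂ * IA n₁ = 0 := by
  obtain ⟨e, he⟩ : ∃ e, n₁ = n₂+1+e := ⟨n₁-(n₂+1), by omega⟩
  simp only [IA]
  rw [he, pow_add, ← mul_assoc iA (cA^(n₂+1)) (cA^e), ← mul_assoc, hG n₂, zero_mul]

end Aux

/-- In `A₀`, `I(n₂) I(n₁) = 0` whenever `n₂ < n₁`;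
explicitly `i (ij-ji)^(n₂) · i (ij-ji)^(n₁) = 0`. -/
theorem preinjectives_multiply_to_zero (n₁ n₂ : ℕ) (h : n₂ < n₁) :
    IA n₂ * IA n₁ = 0 ∧
      (iA * (iA * jA - jA * iA) ^ n₂) * (iA * (iA * jA - jA * iA) ^ n₁) = 0 := by
  refine ⟨mainIA n₁ n₂ h, ?_⟩
  have key := mainIA n₁ n₂ h
  simpa only [IA, cA] using key
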